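/- Let x̄ be feasible for the constraint system G(x) ∈ C, x ∈ D. If for every continuously differentiable function f : X → ℝ the implication 'x̄ is an AM-stationary point of the problem minimize f(x) subject to G(x) ∈ C, x ∈ D ⟹ x̄ is an M-stationary point of that problem' holds, then x̄ is AM-regular. -/

import Mathlib

open Filter Topology RealInnerProductSpace

noncomputable section

/-- The (set-valued) Euclidean projection of `x` onto `D`:
`Π_D(x) = argmin_{z ∈ D} ‖z - x‖`. -/
def projSet {E : Type*} [NormedAddCommGroup E] (D : Set E) (x : E) : Set E :=
  {z | z ∈ D ∧ ∀ w ∈ D, ‖z - x‖ ≤ ‖w - x‖}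

/-- The limiting (Mordukhovich) normal cone to `D` at `x`:
`N_D^lim(x) = limsup_{v → x} cone(v - Π_D(v))`, empty outside `D`. -/
def limNormalCone {E : Type*} [NormedAddCommGroup E] [NormedSpace ℝ E]
    (D : Set E) (x : E) : Set E :=
  {w | x ∈ D ∧ ∃ v ws : ℕ → E,
    Tendsto v atTop (𝓝 x) ∧ Tendsto ws atTop (𝓝 w) ∧
    ∀ j, ∃ t : ℝ, ∃ p, 0 ≤ t ∧ p ∈ projSet D (v j) ∧ ws j = t • (v j - p)}

/-- The normal cone (of convex analysis) to the convex set `C` at `y`, empty outside `C`. -/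
def convNormalCone {E : Type*} [NormedAddCommGroup E] [InnerProductSpace ℝ E]
    (C : Set E) (y : E) : Set E :=
  {l | y ∈ C ∧ ∀ c ∈ C, ⟪l, c - y⟫ ≤ 0}

variable {X Y : Type*} [NormedAddCommGroup X] [InnerProductSpace ℝ X] [FiniteDimensional ℝ X]
  [NormedAddCommGroup Y] [InnerProductSpace ℝ Y] [FiniteDimensional ℝ Y]

/-- `xb` is an M-stationary (Mordukhovich-stationary) point of problem (P):
minimize `f x` s.t. `G x ∈ C`, `x ∈ D`. -/
def MStationary (f : X → ℝ) (G : X → Y) (C : Set Y) (D : Set X) (xb : X) : Prop :=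
  G xb ∈ C ∧ xb ∈ D ∧
    ∃ l : Y, l ∈ convNormalCone C (G xb) ∧
      ∃ w ∈ limNormalCone D xb,
        gradient f xb + ContinuousLinearMap.adjoint (fderiv ℝ G xb) l + w = 0

/-- `xb` is an AM-stationary (asymptotically M-stationary) point of problem (P). -/
def AMStationary (f : X → ℝ) (G : X → Y) (C : Set Y) (D : Set X) (xb : X) : Prop :=
  G xb ∈ C ∧ xb ∈ D ∧
    ∃ (xs εs : ℕ → X) (zs lam : ℕ → Y),
      Tendsto xs atTop (𝓝 xb) ∧ Tendsto εs atTop (𝓝 0) ∧ Tendsto zs atTop (𝓝 0) ∧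
      ∀ k, lam k ∈ convNormalCone C (G (xs k) - zs k) ∧
        ∃ w ∈ limNormalCone D (xs k),
          εs k = gradient f (xs k) +
            ContinuousLinearMap.adjoint (fderiv ℝ G (xs k)) (lam k) + w

/-- The set `M(x,z) = G'(x)* N_C(G(x) - z) + N_D^lim(x)`. -/
def Mset (G : X → Y) (C : Set Y) (D : Set X) (x : X) (z : Y) : Set X :=
  {v | ∃ l ∈ convNormalCone C (G x - z), ∃ w ∈ limNormalCone D x,
    v = ContinuousLinearMap.adjoint (fderiv ℝ G x) l + w}

/-- `xb` is AM-regular: `limsup_{x → xb, z → 0} M(x,z) ⊆ M(xb, 0)`. -/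
def AMRegular (G : X → Y) (C : Set Y) (D : Set X) (xb : X) : Prop :=
  ∀ v : X,
    (∃ (xs : ℕ → X) (zs : ℕ → Y) (vs : ℕ → X),
      (∀ k, xs k ∈ D) ∧ Tendsto xs atTop (𝓝 xb) ∧ Tendsto zs atTop (𝓝 0) ∧
      Tendsto vs atTop (𝓝 v) ∧ ∀ k, vs k ∈ Mset G C D (xs k) (zs k)) →
    v ∈ Mset G C D xb 0

/-!
Given `v^k ∈ M(x^k, z^k)` with `x^k → x̄`, `z^k → 0`, `v^k → v`, test the hypothesis on the linear
objective `f x = ⟪-v, x⟫`: its gradient is the constant `-v`, so `ε^k := v^k - v → 0` makes `x̄`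
AM-stationary, and M-stationarity of `x̄` for this `f` says exactly `v ∈ M(x̄, 0)`.
-/

theorem gradient_inner_left {E : Type*} [NormedAddCommGroup E] [InnerProductSpace ℝ E]
    [CompleteSpace E] (a x : E) : gradient (fun y => ⟪a, y⟫) x = a :=
  (hasGradientAt_iff_hasFDerivAt.2 (InnerProductSpace.toDual ℝ E a).hasFDerivAt).gradient

theorem amStationary_inner_neg_of_tendsto_Mset {G : X → Y} {C : Set Y} {D : Set X} {xb v : X}
    (hGxb : G xb ∈ C) (hxbD : xb ∈ D) {xs vs : ℕ → X} {zs : ℕ → Y}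
    (hxs : Tendsto xs atTop (𝓝 xb)) (hzs : Tendsto zs atTop (𝓝 0))
    (hvs : Tendsto vs atTop (𝓝 v)) (hmem : ∀ k, vs k ∈ Mset G C D (xs k) (zs k)) :
    AMStationary (fun x => ⟪-v, x⟫) G C D xb := by
  choose lam hlam w hw hvs_eq using hmem
  refine ⟨hGxb, hxbD, xs, fun k => -v + vs k, zs, lam, hxs, ?_, hzs,
    fun k => ⟨hlam k, w k, hw k, ?_⟩⟩
  · simpa using (tendsto_const_nhds (x := -v)).add hvs
  · rw [gradient_inner_left, add_assoc, ← hvs_eq]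

theorem MStationary.mem_Mset_of_inner_neg {G : X → Y} {C : Set Y} {D : Set X} {xb v : X}
    (h : MStationary (fun x => ⟪-v, x⟫) G C D xb) : v ∈ Mset G C D xb 0 := by
  obtain ⟨-, -, l, hl, w, hw, heq⟩ := h
  rw [gradient_inner_left, add_assoc, neg_add_eq_zero] at heq
  exact ⟨l, by simpa using hl, w, hw, heq⟩

theorem AM_regular_is_weakest_CQ_general
    (G : X → Y) (C : Set Y) (D : Set X)
    (xb : X) (hGxb : G xb ∈ C) (hxbD : xb ∈ D)
    (himp : ∀ f : X → ℝ, ContDiff ℝ 1 f →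
      AMStationary f G C D xb → MStationary f G C D xb) :
    AMRegular G C D xb := by
  rintro v ⟨xs, zs, vs, -, hxs, hzs, hvs, hmem⟩
  exact (himp _ (innerSL ℝ (-v)).contDiff
    (amStationary_inner_neg_of_tendsto_Mset hGxb hxbD hxs hzs hvs hmem)).mem_Mset_of_inner_neg

/-- if for every continuously differentiable objective `f` AM-stationarity of
`xb` implies M-stationarity of `xb`, then the feasible point `xb` is AM-regular. -/
theorem AM_regular_is_weakest_CQ
    (G : X → Y) (C : Set Y) (D : Set X)
    (hG : ContDiff ℝ 1 G)
    (hCne : C.Nonempty) (hCcl : IsClosed C) (hCconv : Convex ℝ C)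
    (hDne : D.Nonempty) (hDcl : IsClosed D)
    (xb : X) (hGxb : G xb ∈ C) (hxbD : xb ∈ D)
    (himp : ∀ f : X → ℝ, ContDiff ℝ 1 f →
      AMStationary f G C D xb → MStationary f G C D xb) :
    AMRegular G C D xb :=
  AM_regular_is_weakest_CQ_general G C D xb hGxb hxbD himp
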